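/- arXiv:2602.09854 — 4 statements merged into one kernel-verified Lean document; each statement's English description precedes it below -/
import Mathlib

section
/- Let f : ℝ^d → ℝ^d satisfy |f(x)| ≤ L₁(1 + |x|^{l+1}) for all x, with constants L₁ > 0, l > 0. Fix T > 0, N ∈ ℕ with N ≥ 1, and α ∈ (0,1]. Define the tamed drift f^α(x) = f(x) / (1 + (T/N)^α |x|^{2l}). Then there exists a constant K depending only on L₁, l, T (and not on N or x) such that |f^α(x)| ≤ K · N^{α/2} · (1 + |x|) for all x ∈ ℝ^d. -/
theorem stmt1 {d : ℕ}
    (f : EuclideanSpace ℝ (Fin d) → EuclideanSpace ℝ (Fin d))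
    (L₁ l T : ℝ) (hL₁ : 0 < L₁) (hl : 0 < l) (hT : 0 < T)
    (hf : ∀ x, ‖f x‖ ≤ L₁ * (1 + ‖x‖ ^ (l + 1))) :
    ∃ K > (0:ℝ), ∀ N : ℕ, 1 ≤ N → ∀ α : ℝ, 0 < α → α ≤ 1 →
      ∀ x : EuclideanSpace ℝ (Fin d),
      ‖(1 + (T / (N:ℝ)) ^ α * ‖x‖ ^ (2 * l))⁻¹ • f x‖
        ≤ K * (N:ℝ) ^ (α / 2) * (1 + ‖x‖) := by
  set t₀ : ℝ := (1/T) ^ ((1:ℝ)/2) with ht₀def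
  have ht₀ : 0 ≤ t₀ := Real.rpow_nonneg (by positivity) _
  clear_value t₀
  refine ⟨L₁ * (2 + t₀), by positivity, ?_⟩
  intro N hN α hα hα1 x
  have hN0 : (0:ℝ) < N := by exact_mod_cast Nat.lt_of_lt_of_le Nat.zero_lt_one hN
  have hTN : 0 < T / (N:ℝ) := div_pos hT hN0
  set r := ‖x‖ with hrdef
  have hr : 0 ≤ r := norm_nonneg x
  have hM : (1:ℝ) ≤ (N:ℝ) ^ (α/2) := by
    apply Real.one_le_rpow (by exact_mod_cast hN) (by linarith)
  set a := (T/(N:ℝ))^α * r^(2*l) with hadef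
  have ha : 0 ≤ a := by positivity
  have hD : 0 < 1 + a := by linarith
  have hnorm : ‖(1 + (T / (N:ℝ)) ^ α * ‖x‖ ^ (2 * l))⁻¹ • f x‖ = (1+a)⁻¹ * ‖f x‖ := by
    rw [norm_smul, Real.norm_eq_abs, abs_of_pos (inv_pos.mpr hD)]
  rw [hnorm]
  have hfx : ‖f x‖ ≤ L₁ * (1 + r ^ (l+1)) := hf x
  have hTb : (1/T)^(α/2) ≤ 1 + t₀ := by
    rcases le_total (1/T) 1 with h | h
    · have h2 : (1/T)^(α/2) ≤ 1 := Real.rpow_le_one (by positivity) h (by linarith)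
      linarith
    · have := Real.rpow_le_rpow_of_exponent_le h (by linarith : α/2 ≤ 1/2)
      rw [ht₀def]
      linarith
  have hTb0 : (0:ℝ) ≤ (1/T)^(α/2) := Real.rpow_nonneg (by positivity) _
  have key : (1+a)⁻¹ * (1 + r^(l+1)) ≤ (2 + t₀) * (N:ℝ)^(α/2) * (1 + r) := by
    rcases eq_or_lt_of_le hr with h0 | h0
    · have hr0 : r = 0 := h0.symm
      have h2 : r ^ (l+1) = 0 := by
        rw [hr0]; exact Real.zero_rpow (by linarith)
      have ha0 : a = 0 := by
        rw [hadef, hr0, Real.zero_rpow (by linarith : 2*l ≠ 0), mul_zero]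
      rw [ha0, h2, hr0]
      simp only [add_zero, inv_one, mul_one]
      nlinarith
    · set s := (T/(N:ℝ))^(α/2) * r^l with hsdef
      have hc : 0 < (T/(N:ℝ))^(α/2) := Real.rpow_pos_of_pos hTN _
      have hrl0 : (0:ℝ) < r^l := Real.rpow_pos_of_pos h0 l
      have hs : 0 < s := mul_pos hc hrl0
      have hp1 : ((T/(N:ℝ))^(α/2))^2 = (T/(N:ℝ))^α := by
        rw [← Real.rpow_natCast ((T/(N:ℝ))^(α/2)) 2, ← Real.rpow_mul hTN.le]
        norm_num
      have hp2 : (r^l)^2 = r^(2*l) := by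
        rw [← Real.rpow_natCast (r^l) 2, ← Real.rpow_mul hr, mul_comm]
        norm_num
      have hs2 : s^2 = a := by
        rw [hsdef, hadef, mul_pow, hp1, hp2]
      have hAM : 2*s ≤ 1 + a := by nlinarith [sq_nonneg (1 - s)]
      have hinv : (1+a)⁻¹ ≤ (2*s)⁻¹ := by
        apply inv_anti₀ (by linarith) hAM
      have hrl : r^(l+1) = r^l * r := by rw [Real.rpow_add h0, Real.rpow_one]
      have hceq : ((T/(N:ℝ))^(α/2))⁻¹ = (N:ℝ)^(α/2) * (1/T)^(α/2) := by
        apply inv_eq_of_mul_eq_one_right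
        rw [← Real.mul_rpow (by positivity) (by positivity),
            ← Real.mul_rpow hTN.le (by positivity)]
        have h1 : T/(N:ℝ) * ((N:ℝ) * (1/T)) = 1 := by field_simp
        rw [h1, Real.one_rpow]
      have heq : (2*s)⁻¹ * r^(l+1) = (N:ℝ)^(α/2) * (1/T)^(α/2) * r / 2 := by
        rw [hrl, hsdef, ← hceq]
        field_simp
      calc (1+a)⁻¹ * (1 + r^(l+1)) = (1+a)⁻¹ + (1+a)⁻¹ * r^(l+1) := by ring
        _ ≤ 1 + (2*s)⁻¹ * r^(l+1) := by
            have h1 : (1+a)⁻¹ ≤ 1 := inv_le_one_of_one_le₀ (by linarith)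
            have h2 : (1+a)⁻¹ * r^(l+1) ≤ (2*s)⁻¹ * r^(l+1) :=
              mul_le_mul_of_nonneg_right hinv (Real.rpow_nonneg hr _)
            linarith
        _ = 1 + (N:ℝ)^(α/2) * (1/T)^(α/2) * r / 2 := by rw [heq]
        _ ≤ (2 + t₀) * (N:ℝ)^(α/2) * (1 + r) := by
            set M := (N:ℝ)^(α/2) with hMdef
            clear_value M
            have hMpos : (0:ℝ) ≤ M := by linarith
            have e1 : M * (1/T)^(α/2) * r ≤ M * (1+t₀) * r := by
              apply mul_le_mul_of_nonneg_right (mul_le_mul_of_nonneg_left hTb hMpos) hr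
            have e2 : 0 ≤ M * r := mul_nonneg hMpos hr
            have e3 : 0 ≤ t₀ * M := mul_nonneg ht₀ hMpos
            have e4 : 0 ≤ t₀ * (M * r) := mul_nonneg ht₀ e2
            have e0 : 0 ≤ M * (1/T)^(α/2) * r :=
              mul_nonneg (mul_nonneg hMpos hTb0) hr
            have e5 : (2+t₀) * M * (1+r) = 2*M + t₀*M + 2*(M*r) + t₀*(M*r) := by ring
            have e7 : M * (1+t₀) * r = M*r + t₀*(M*r) := by ring
            rw [e5]
            rw [e7] at e1
            linarith [e1, e0, e2, e3, e4, hM]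
  calc (1+a)⁻¹ * ‖f x‖ ≤ (1+a)⁻¹ * (L₁ * (1 + r^(l+1))) :=
        mul_le_mul_of_nonneg_left hfx (by positivity)
    _ = L₁ * ((1+a)⁻¹ * (1 + r^(l+1))) := by ring
    _ ≤ L₁ * ((2 + t₀) * (N:ℝ)^(α/2) * (1 + r)) :=
        mul_le_mul_of_nonneg_left key hL₁.le
    _ = L₁ * (2 + t₀) * (N:ℝ)^(α/2) * (1 + r) := by ring
end

section
/- Let g : ℝ^d → ℝ^{d×m} satisfy |g(x)|² ≤ L₁(1 + |x|^{l+2}) for all x, with constants L₁ > 0, l > 0. Fix T > 0, N ≥ 1, α ∈ (0,1], and define g^α(x) = g(x) / (1 + (T/N)^α |x|^{2l}). Then there exists a constant K depending only on L₁, l, T such that |g^α(x)|² ≤ K · N^{α/2} · (1 + |x|²) for all x ∈ ℝ^d. -/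
set_option maxHeartbeats 1000000 in
lemma stmt2_aux (L₁ l T : ℝ) (hL₁ : 0 < L₁) (hl : 0 < l) (hT : 0 < T)
    (N : ℕ) (hN : 1 ≤ N) (α : ℝ) (hα : 0 < α) (hα1 : α ≤ 1)
    (n G : ℝ) (hn0 : 0 ≤ n) (hgx : G ^ 2 ≤ L₁ * (1 + n ^ (l + 2))) :
    ((1 + (T / (N:ℝ)) ^ α * n ^ (2 * l))⁻¹ * G) ^ 2
      ≤ L₁ * (1 + max 1 T⁻¹) * (N:ℝ) ^ (α / 2) * (1 + n ^ 2) := by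
  have hN0 : (0:ℝ) < N := by exact_mod_cast Nat.lt_of_lt_of_le Nat.zero_lt_one hN
  have hN1 : (1:ℝ) ≤ N := by exact_mod_cast hN
  have hTN : 0 < T / N := div_pos hT hN0
  obtain ⟨u, hu⟩ : ∃ u, u = (T / (N:ℝ)) ^ α * n ^ (2 * l) := ⟨_, rfl⟩
  rw [← hu]
  have hu0 : 0 ≤ u := hu ▸ by positivity
  have hD0 : (0:ℝ) < 1 + u := by linarith
  have hD1 : (1:ℝ) ≤ 1 + u := by linarith
  obtain ⟨q, hq⟩ : ∃ q, q = (N:ℝ) ^ (α / 2) := ⟨_, rfl⟩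
  rw [← hq]
  have hq1 : (1:ℝ) ≤ q := hq ▸ Real.one_le_rpow hN1 (by positivity)
  have hq0 : 0 < q := lt_of_lt_of_le one_pos hq1
  have hc0 : (0:ℝ) < max 1 T⁻¹ := lt_max_of_lt_left one_pos
  rw [mul_pow]
  have hinv2 : ((1 + u)⁻¹) ^ 2 ≤ 1 := by
    have h : (1 + u)⁻¹ ≤ 1 := inv_le_one_of_one_le₀ hD1
    nlinarith [inv_pos.mpr hD0]
  have b1 : ((1 + u)⁻¹) ^ 2 * L₁ ≤ L₁ * q * (1 + n ^ 2) := by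
    calc ((1 + u)⁻¹) ^ 2 * L₁ ≤ 1 * L₁ := mul_le_mul_of_nonneg_right hinv2 hL₁.le
      _ = L₁ := one_mul L₁
      _ ≤ L₁ * (q * (1 + n ^ 2)) := by
          nth_rewrite 1 [← mul_one L₁]
          refine mul_le_mul_of_nonneg_left ?_ hL₁.le
          nlinarith [sq_nonneg n]
      _ = L₁ * q * (1 + n ^ 2) := by ring
  have b2 : ((1 + u)⁻¹) ^ 2 * (L₁ * n ^ (l + 2)) ≤ L₁ * max 1 T⁻¹ * q * (1 + n ^ 2) := by
    rcases eq_or_lt_of_le hn0 with h0 | hn'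
    · rw [← h0, Real.zero_rpow (by positivity)]
      have h : (0:ℝ) ≤ L₁ * max 1 T⁻¹ * q * (1 + (0:ℝ) ^ 2) := by positivity
      simpa using h
    · obtain ⟨s, hs⟩ : ∃ s, s = (T / (N:ℝ)) ^ (α / 2) := ⟨_, rfl⟩
      obtain ⟨p, hp⟩ : ∃ p, p = n ^ l := ⟨_, rfl⟩
      have hs0 : 0 < s := hs ▸ Real.rpow_pos_of_pos hTN _
      have hp0 : 0 < p := hp ▸ Real.rpow_pos_of_pos hn' _
      have husp : u = (s * p) ^ 2 := by
        rw [hu, hs, hp, mul_pow, ← Real.rpow_natCast ((T/(N:ℝ)) ^ (α/2)) 2,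
          ← Real.rpow_natCast (n ^ l) 2, ← Real.rpow_mul hTN.le, ← Real.rpow_mul hn0]
        push_cast
        rw [show α / 2 * 2 = α by ring, show l * 2 = 2 * l by ring]
      have hnl2 : n ^ (l + 2) = p * n ^ 2 := by
        rw [hp, ← Real.rpow_natCast n 2, ← Real.rpow_add hn']
        norm_num
      have hAM : 2 * (s * p) ≤ (1 + u) ^ 2 := by
        nlinarith [sq_nonneg (1 - s * p), sq_nonneg (s * p), hu0]
      have hsq : s * q = T ^ (α / 2) := by
        rw [hs, hq, Real.div_rpow hT.le hN0.le, div_mul_cancel₀]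
        exact ne_of_gt (Real.rpow_pos_of_pos hN0 _)
      have ht0 : 0 < T ^ (α / 2) := Real.rpow_pos_of_pos hT _
      have htc : (T ^ (α / 2))⁻¹ ≤ max 1 T⁻¹ := by
        rcases le_total 1 T with h | h
        · refine le_trans ?_ (le_max_left _ _)
          rw [inv_le_one_iff₀]
          right
          exact Real.one_le_rpow h (by positivity)
        · refine le_trans ?_ (le_max_right _ _)
          rw [inv_le_inv₀ ht0 hT]
          calc T = T ^ (1:ℝ) := (Real.rpow_one T).symm
            _ ≤ T ^ (α / 2) := Real.rpow_le_rpow_of_exponent_ge hT h (by linarith)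
      have key : ((1 + u)⁻¹) ^ 2 * p ≤ max 1 T⁻¹ * q := by
        have h1 : ((1 + u)⁻¹) ^ 2 * p = p / (1 + u) ^ 2 := by
          rw [inv_pow]; ring
        have h1' : p / (1 + u) ^ 2 ≤ p / (2 * (s * p)) := by gcongr
        have h2 : p / (2 * (s * p)) = (2 * s)⁻¹ := by
          field_simp
        have h3 : (2 * s)⁻¹ ≤ (T ^ (α/2))⁻¹ * q := by
          rw [← hsq]
          have he : (s * q)⁻¹ * q = s⁻¹ := by field_simp
          rw [he, mul_inv]
          nlinarith [inv_pos.mpr hs0]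
        calc ((1 + u)⁻¹) ^ 2 * p = p / (1 + u) ^ 2 := h1
          _ ≤ p / (2 * (s * p)) := h1'
          _ = (2 * s)⁻¹ := h2
          _ ≤ (T ^ (α/2))⁻¹ * q := h3
          _ ≤ max 1 T⁻¹ * q := by gcongr
      rw [hnl2]
      have he : ((1 + u)⁻¹) ^ 2 * (L₁ * (p * n ^ 2)) = L₁ * (((1 + u)⁻¹) ^ 2 * p) * n ^ 2 := by
        ring
      rw [he]
      have h4 : L₁ * (((1 + u)⁻¹) ^ 2 * p) * n ^ 2 ≤ L₁ * (max 1 T⁻¹ * q) * n ^ 2 := by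
        gcongr
      refine h4.trans ?_
      nlinarith [sq_nonneg n, mul_pos (mul_pos hL₁ hc0) hq0]
  calc ((1 + u)⁻¹) ^ 2 * G ^ 2 ≤ ((1 + u)⁻¹) ^ 2 * (L₁ * (1 + n ^ (l + 2))) :=
        mul_le_mul_of_nonneg_left hgx (by positivity)
    _ = ((1 + u)⁻¹) ^ 2 * L₁ + ((1 + u)⁻¹) ^ 2 * (L₁ * n ^ (l + 2)) := by ring
    _ ≤ L₁ * q * (1 + n ^ 2) + L₁ * max 1 T⁻¹ * q * (1 + n ^ 2) := add_le_add b1 b2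
    _ = L₁ * (1 + max 1 T⁻¹) * q * (1 + n ^ 2) := by ring

theorem stmt2 {d m : ℕ}
    (g : EuclideanSpace ℝ (Fin d) → EuclideanSpace ℝ (Fin d × Fin m))
    (L₁ l T : ℝ) (hL₁ : 0 < L₁) (hl : 0 < l) (hT : 0 < T)
    (hg : ∀ x, ‖g x‖ ^ 2 ≤ L₁ * (1 + ‖x‖ ^ (l + 2))) :
    ∃ K > (0:ℝ), ∀ N : ℕ, 1 ≤ N → ∀ α : ℝ, 0 < α → α ≤ 1 →
      ∀ x : EuclideanSpace ℝ (Fin d),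
      ‖(1 + (T / (N:ℝ)) ^ α * ‖x‖ ^ (2 * l))⁻¹ • g x‖ ^ 2
        ≤ K * (N:ℝ) ^ (α / 2) * (1 + ‖x‖ ^ 2) := by
  refine ⟨L₁ * (1 + max 1 T⁻¹), by positivity, ?_⟩
  intro N hN α hα hα1 x
  have hN0 : (0:ℝ) < N := by exact_mod_cast Nat.lt_of_lt_of_le Nat.zero_lt_one hN
  have hTN : 0 < T / N := div_pos hT hN0
  have hD0 : (0:ℝ) < 1 + (T / (N:ℝ)) ^ α * ‖x‖ ^ (2 * l) := by positivity
  rw [norm_smul, Real.norm_eq_abs, abs_of_pos (inv_pos.mpr hD0)]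
  exact stmt2_aux L₁ l T hL₁ hl hT N hN α hα hα1 ‖x‖ ‖g x‖ (norm_nonneg x) (hg x)
end

section
/- Let f : ℝ^d → ℝ^d and, for T > 0, N ≥ 1, α > 0, l' > 0, define f^α(x) = f(x)/(1 + (T/N)^α |x|^{l'}). If |f(x)| ≤ L₁(1 + |x|^{l+1}) and l' ≥ ⌈2α⌉ · l, then there exists K = K(L₁, l, l', α, T) such that |f^α(x)| ≤ K · N^{α/⌈2α⌉} · (1 + |x|) for all x ∈ ℝ^d. In particular, since α/⌈2α⌉ ≤ 1/2, the tamed drift grows at most like √N times a linear function of x. -/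
/-! With `n = ⌈2α⌉` and `t = (T/N)^α`, put `u = t^(1/n) |x|^l`. Since `n ≥ 1`, `u ≤ 1 + u^n`, and
`u^n = t |x|^(n l) ≤ t |x|^l'` when `|x| ≥ 1`; dividing by `t^(1/n) = (T/N)^(α/n)` gives
`|x|^l ≤ (N/T)^(α/n) (1 + t |x|^l')`. Hence the taming denominator absorbs the superlinear part
`|x|^l` of the growth of `f` at the cost of the factor `N^(α/n)`. -/

open Real

lemma le_one_add_pow {u : ℝ} (hu : 0 ≤ u) {n : ℕ} (hn : n ≠ 0) : u ≤ 1 + u ^ n := by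
  rcases le_or_gt u 1 with hu1 | hu1
  · linarith [pow_nonneg hu n]
  · calc u = u ^ 1 := (pow_one u).symm
      _ ≤ u ^ n := pow_le_pow_right₀ hu1.le (Nat.one_le_iff_ne_zero.mpr hn)
      _ ≤ 1 + u ^ n := le_add_of_nonneg_left zero_le_one

lemma le_rpow_neg_inv_mul_one_add_mul_pow {t y : ℝ} (ht : 0 < t) (hy : 0 ≤ y) {n : ℕ}
    (hn : n ≠ 0) : y ≤ t ^ (-(n⁻¹ : ℝ)) * (1 + t * y ^ n) := by
  set s := t ^ (n⁻¹ : ℝ)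
  have hs : 0 < s := rpow_pos_of_pos ht _
  have hsn : s ^ n = t := rpow_inv_natCast_pow ht.le hn
  calc y = s⁻¹ * (s * y) := by field_simp
    _ ≤ s⁻¹ * (1 + (s * y) ^ n) :=
        mul_le_mul_of_nonneg_left (le_one_add_pow (by positivity) hn) (by positivity)
    _ = t ^ (-(n⁻¹ : ℝ)) * (1 + t * y ^ n) := by rw [rpow_neg ht.le, mul_pow, hsn]

lemma rpow_le_one_add_rpow_neg_inv_mul {a l l' t : ℝ} {n : ℕ} (ha : 0 ≤ a) (hl : 0 ≤ l)
    (ht : 0 < t) (hn : n ≠ 0) (hll' : n * l ≤ l') :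
    a ^ l ≤ (1 + t ^ (-(n⁻¹ : ℝ))) * (1 + t * a ^ l') := by
  have hD : 1 ≤ 1 + t * a ^ l' := le_add_of_nonneg_right (by positivity)
  have hc : 0 ≤ t ^ (-(n⁻¹ : ℝ)) := by positivity
  rcases le_or_gt a 1 with ha1 | ha1
  · calc a ^ l ≤ 1 := rpow_le_one ha ha1 hl
      _ ≤ (1 + t ^ (-(n⁻¹ : ℝ))) * (1 + t * a ^ l') := by nlinarith
  · have hpow : (a ^ l) ^ n ≤ a ^ l' := by
      rw [← rpow_mul_natCast ha, mul_comm]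
      exact rpow_le_rpow_of_exponent_le ha1.le hll'
    calc a ^ l ≤ t ^ (-(n⁻¹ : ℝ)) * (1 + t * (a ^ l) ^ n) :=
          le_rpow_neg_inv_mul_one_add_mul_pow ht (by positivity) hn
      _ ≤ t ^ (-(n⁻¹ : ℝ)) * (1 + t * a ^ l') := by gcongr
      _ ≤ (1 + t ^ (-(n⁻¹ : ℝ))) * (1 + t * a ^ l') := by nlinarith

lemma div_rpow_rpow_neg_inv {T N α : ℝ} (hT : 0 < T) (hN : 0 < N) (n : ℕ) :
    ((T / N) ^ α) ^ (-(n⁻¹ : ℝ)) = T ^ (-(α / n)) * N ^ (α / n) := by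
  rw [← rpow_mul (div_pos hT hN).le, show α * -(n⁻¹ : ℝ) = -(α / n) by ring,
    div_rpow hT.le hN.le, rpow_neg hT.le, rpow_neg hN.le, div_inv_eq_mul]

lemma one_add_rpow_le_mul_taming {a l l' T N α : ℝ} {n : ℕ} (ha : 0 ≤ a) (hl : 0 ≤ l)
    (hT : 0 < T) (hN : 1 ≤ N) (hα : 0 ≤ α) (hn : n ≠ 0) (hll' : n * l ≤ l') :
    1 + a ^ l ≤ (2 + T ^ (-(α / n))) * N ^ (α / n) * (1 + (T / N) ^ α * a ^ l') := by
  have hN0 : 0 < N := one_pos.trans_le hN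
  have hNβ : 1 ≤ N ^ (α / n) := one_le_rpow hN (by positivity)
  have hD : 1 ≤ 1 + (T / N) ^ α * a ^ l' := le_add_of_nonneg_right (by positivity)
  have key := rpow_le_one_add_rpow_neg_inv_mul ha hl (rpow_pos_of_pos (div_pos hT hN0) α) hn hll'
  rw [div_rpow_rpow_neg_inv hT hN0] at key
  have hc : 0 ≤ T ^ (-(α / n)) := by positivity
  nlinarith [mul_le_mul hNβ hD zero_le_one (by positivity)]

lemma one_add_rpow_add_one_le {a l : ℝ} (ha : 0 ≤ a) (hl : 0 ≤ l) :
    1 + a ^ (l + 1) ≤ (1 + a ^ l) * (1 + a) := by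
  rw [rpow_add' ha (by linarith), rpow_one]
  nlinarith [rpow_nonneg ha l]

theorem stmt3_general {d : ℕ}
    (f : EuclideanSpace ℝ (Fin d) → EuclideanSpace ℝ (Fin d))
    (L₁ l l' T α : ℝ) (hL₁ : 0 < L₁) (hl : 0 < l)
    (hT : 0 < T) (hα : 0 < α)
    (hf : ∀ x, ‖f x‖ ≤ L₁ * (1 + ‖x‖ ^ (l + 1)))
    (hll' : (⌈2 * α⌉₊ : ℝ) * l ≤ l') :
    ∃ K > (0:ℝ), ∀ N : ℕ, 1 ≤ N → ∀ x : EuclideanSpace ℝ (Fin d),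
      ‖(1 + (T / (N:ℝ)) ^ α * ‖x‖ ^ l')⁻¹ • f x‖
        ≤ K * (N:ℝ) ^ (α / (⌈2 * α⌉₊ : ℝ)) * (1 + ‖x‖) := by
  have hn : ⌈2 * α⌉₊ ≠ 0 := (Nat.ceil_pos.mpr (by positivity)).ne'
  refine ⟨L₁ * (2 + T ^ (-(α / ⌈2 * α⌉₊))), by positivity, fun N hN x => ?_⟩
  have hD : 0 < 1 + (T / (N:ℝ)) ^ α * ‖x‖ ^ l' := by positivity
  have hgrowth := one_add_rpow_le_mul_taming (norm_nonneg x) hl.le hT (Nat.one_le_cast.mpr hN)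
    hα.le hn hll'
  rw [norm_smul, norm_inv, Real.norm_of_nonneg hD.le, inv_mul_le_iff₀ hD]
  calc ‖f x‖ ≤ L₁ * ((1 + ‖x‖ ^ l) * (1 + ‖x‖)) :=
        (hf x).trans (mul_le_mul_of_nonneg_left (one_add_rpow_add_one_le (norm_nonneg x) hl.le)
          hL₁.le)
    _ ≤ L₁ * ((2 + T ^ (-(α / ⌈2 * α⌉₊))) * (N:ℝ) ^ (α / ⌈2 * α⌉₊) *
          (1 + (T / N) ^ α * ‖x‖ ^ l') * (1 + ‖x‖)) := by gcongr
    _ = _ := by ring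

theorem stmt3 {d : ℕ}
    (f : EuclideanSpace ℝ (Fin d) → EuclideanSpace ℝ (Fin d))
    (L₁ l l' T α : ℝ) (hL₁ : 0 < L₁) (hl : 0 < l) (hl' : 0 < l')
    (hT : 0 < T) (hα : 0 < α)
    (hf : ∀ x, ‖f x‖ ≤ L₁ * (1 + ‖x‖ ^ (l + 1)))
    (hll' : (⌈2 * α⌉₊ : ℝ) * l ≤ l') :
    ∃ K > (0:ℝ), ∀ N : ℕ, 1 ≤ N → ∀ x : EuclideanSpace ℝ (Fin d),
      ‖(1 + (T / (N:ℝ)) ^ α * ‖x‖ ^ l')⁻¹ • f x‖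
        ≤ K * (N:ℝ) ^ (α / (⌈2 * α⌉₊ : ℝ)) * (1 + ‖x‖) :=
  stmt3_general f L₁ l l' T α hL₁ hl hT hα hf hll'
end

section
/- Let f : ℝ^d → ℝ^d and g : ℝ^d → ℝ^{d×m} satisfy 2⟨x, f(x)⟩ + (p₁ - 1)|g(x)|² ≤ L₁(1 + |x|²) for all x (with p₁ > 1, L₁ > 0), and suppose f, g have at most polynomial growth. Fix T > 0, N ≥ 1, α ∈ (0,1], and define f^α(x) = f(x)/(1 + (T/N)^α|x|^{2l}), g^α(x) = g(x)/(1 + (T/N)^α|x|^{2l}) for some l > 0. Then for every p ≤ p₁ there exists K (independent of N and x) such that 2⟨x, f^α(x)⟩ + (p - 1)|g^α(x)|² ≤ K(1 + |x|²) for all x ∈ ℝ^d. -/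
open scoped RealInnerProductSpace

theorem stmt4 {d m : ℕ}
    (f : EuclideanSpace ℝ (Fin d) → EuclideanSpace ℝ (Fin d))
    (g : EuclideanSpace ℝ (Fin d) → EuclideanSpace ℝ (Fin d × Fin m))
    (L₁ p₁ l T α : ℝ) (hL₁ : 0 < L₁) (hp₁ : 1 < p₁) (hl : 0 < l)
    (hT : 0 < T) (hα : 0 < α) (hα1 : α ≤ 1)
    (hcoer : ∀ x, 2 * ⟪x, f x⟫ + (p₁ - 1) * ‖g x‖ ^ 2 ≤ L₁ * (1 + ‖x‖ ^ 2))
    (hgrowth : ∃ C η : ℝ, 0 < C ∧ 0 < η ∧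
      ∀ x, ‖f x‖ ≤ C * (1 + ‖x‖ ^ η) ∧ ‖g x‖ ≤ C * (1 + ‖x‖ ^ η)) :
    ∀ p : ℝ, p ≤ p₁ → ∃ K > (0:ℝ), ∀ N : ℕ, 1 ≤ N →
      ∀ x : EuclideanSpace ℝ (Fin d),
      2 * ⟪x, (1 + (T / (N:ℝ)) ^ α * ‖x‖ ^ (2 * l))⁻¹ • f x⟫ +
        (p - 1) * ‖(1 + (T / (N:ℝ)) ^ α * ‖x‖ ^ (2 * l))⁻¹ • g x‖ ^ 2
        ≤ K * (1 + ‖x‖ ^ 2) := by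
  intro p hp
  refine ⟨L₁, hL₁, ?_⟩
  intro N hN x
  have hNpos : (0:ℝ) < (N:ℝ) := by exact_mod_cast Nat.lt_of_lt_of_le Nat.zero_lt_one hN
  set c := (T / (N:ℝ)) ^ α * ‖x‖ ^ (2 * l) with hc
  have hc0 : 0 ≤ c :=
    mul_nonneg (Real.rpow_nonneg (le_of_lt (div_pos hT hNpos)) _)
      (Real.rpow_nonneg (norm_nonneg _) _)
  have hDpos : (0:ℝ) < 1 + c := by linarith
  set t := (1 + c)⁻¹ with ht
  have ht0 : 0 < t := inv_pos.mpr hDpos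
  have ht1 : t ≤ 1 := by
    rw [ht]
    exact inv_le_one_of_one_le₀ (by linarith)
  have hinner : ⟪x, t • f x⟫ = t * ⟪x, f x⟫ := real_inner_smul_right _ _ _
  have hnorm : ‖t • g x‖ ^ 2 = t ^ 2 * ‖g x‖ ^ 2 := by
    rw [norm_smul, mul_pow, Real.norm_eq_abs, sq_abs]
  rw [hinner, hnorm]
  have hB : (0:ℝ) ≤ ‖g x‖ ^ 2 := sq_nonneg _
  have hR : (0:ℝ) ≤ L₁ * (1 + ‖x‖ ^ 2) := by positivity
  have hco := hcoer x
  set A := ⟪x, f x⟫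
  set B := ‖g x‖ ^ 2
  rcases le_or_gt p 1 with hp1 | hp1
  · have h1 : (p - 1) * (t ^ 2 * B) ≤ 0 := by nlinarith
    have h2 : 2 * (t * A) ≤ L₁ * (1 + ‖x‖ ^ 2) := by
      rcases le_or_gt A 0 with hA | hA
      · nlinarith
      · nlinarith
    linarith
  · have ht2 : t ^ 2 * B ≤ t * B := by
      nlinarith [mul_nonneg (mul_nonneg ht0.le (by linarith : (0:ℝ) ≤ 1 - t)) hB]
    have e1 : (p - 1) * (t ^ 2 * B) ≤ (p - 1) * (t * B) :=
      mul_le_mul_of_nonneg_left ht2 (by linarith)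
    have e2 : (p - 1) * (t * B) ≤ (p₁ - 1) * (t * B) :=
      mul_le_mul_of_nonneg_right (by linarith) (mul_nonneg ht0.le hB)
    have hring : t * (2 * A + (p₁ - 1) * B) = 2 * (t * A) + (p₁ - 1) * (t * B) := by ring
    have hts : t * (2 * A + (p₁ - 1) * B) ≤ L₁ * (1 + ‖x‖ ^ 2) := by
      rcases le_or_gt (2 * A + (p₁ - 1) * B) 0 with h | h
      · have := mul_nonpos_of_nonneg_of_nonpos ht0.le h
        linarith
      · have := mul_le_of_le_one_left h.le ht1
        linarith
    linarith
end
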